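/- arXiv:2108.08939 — 4 statements merged into one kernel-verified Lean document; each statement's English description precedes it below -/
import Mathlib

section
/- (Structure Lemma) Every nonzero nonconstant monomial (image of a path) in the preprojective algebra Π of the extended Dynkin quiver of type Ã_{n-1} equals a product β_1⋯β_ℓ γ_1⋯γ_m where each β_i is a nonstar arrow and each γ_j is a star arrow; that is, every path is equivalent modulo the preprojective relations to one with all nonstar arrows preceding all star arrows. -/
open scoped BigOperators

/-- Generators of the path algebra of the double of the extended Dynkin quiver Ã_{n-1}:
vertex idempotents `vtx i`, nonstar arrows `arr i : e_i → e_{i+1}`,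
star arrows `star i : e_{i+1} → e_i`. -/
inductive PPGen (n : ℕ) : Type
  | vtx (i : ZMod n)
  | arr (i : ZMod n)
  | star (i : ZMod n)

variable (K : Type) [Field K] (n : ℕ) [NeZero n]

abbrev PPFree := FreeAlgebra K (PPGen n)

noncomputable def E (i : ZMod n) : PPFree K n := FreeAlgebra.ι K (PPGen.vtx i)
noncomputable def A (i : ZMod n) : PPFree K n := FreeAlgebra.ι K (PPGen.arr i)
noncomputable def S (i : ZMod n) : PPFree K n := FreeAlgebra.ι K (PPGen.star i)

/-- Defining relations of the preprojective algebra Π_{Ã_{n-1}}: the path-algebra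
relations for the double quiver, together with the preprojective relation
Ω = Σ_i (α_i α_i* − α_i* α_i) = 0. -/
inductive PPRel : PPFree K n → PPFree K n → Prop
  | vtx_mul (i j : ZMod n) :
      PPRel (E K n i * E K n j) (if i = j then E K n i else 0)
  | vtx_sum : PPRel (∑ i : ZMod n, E K n i) 1
  | arr_left (i : ZMod n) : PPRel (E K n i * A K n i) (A K n i)
  | arr_right (i : ZMod n) : PPRel (A K n i * E K n (i + 1)) (A K n i)
  | arr_left' (i j : ZMod n) : j ≠ i → PPRel (E K n j * A K n i) 0
  | arr_right' (i j : ZMod n) : j ≠ i + 1 → PPRel (A K n i * E K n j) 0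
  | star_left (i : ZMod n) : PPRel (E K n (i + 1) * S K n i) (S K n i)
  | star_right (i : ZMod n) : PPRel (S K n i * E K n i) (S K n i)
  | star_left' (i j : ZMod n) : j ≠ i + 1 → PPRel (E K n j * S K n i) 0
  | star_right' (i j : ZMod n) : j ≠ i → PPRel (S K n i * E K n j) 0
  | preproj :
      PPRel (∑ i : ZMod n, (A K n i * S K n i - S K n i * A K n i)) 0

/-- The preprojective algebra Π_{Ã_{n-1}}. -/
abbrev Preproj := RingQuot (PPRel K n)

/-- The canonical projection from the free algebra onto Π_{Ã_{n-1}}. -/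
noncomputable def pp : PPFree K n →ₐ[K] Preproj K n := RingQuot.mkAlgHom K (PPRel K n)

/-- `aPath i ℓ` is the pure nonstar path α_i α_{i+1} ⋯ α_{i+ℓ-1} (with `aPath i 0 = e_i`). -/
noncomputable def aPath (i : ZMod n) : ℕ → PPFree K n
  | 0 => E K n i
  | (ℓ + 1) => A K n i * aPath (i + 1) ℓ

/-- `sPath j m` is the pure star path α_{j-1}* α_{j-2}* ⋯ α_{j-m}* starting at vertex j
(with `sPath j 0 = e_j`). -/
noncomputable def sPath (j : ZMod n) : ℕ → PPFree K n
  | 0 => E K n j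
  | (m + 1) => S K n (j - 1) * sPath (j - 1) m

/-- The canonical-form path with source e_i consisting of ℓ nonstar arrows followed by
m star arrows, as an element of Π_{Ã_{n-1}}. -/
noncomputable def cpath (i : ZMod n) (ℓ m : ℕ) : Preproj K n :=
  pp K n (aPath K n i ℓ * sPath K n (i + (ℓ : ZMod n)) m)

/-- The orbit sum O(ℓ,m): the sum over all paths in B_{ℓ,m} = Q_ℓQ_m* ∪ Q_mQ_ℓ*. -/
noncomputable def OO (ℓ m : ℕ) : Preproj K n :=
  if ℓ = m then ∑ i : ZMod n, cpath K n i ℓ ℓ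
  else ∑ i : ZMod n, (cpath K n i ℓ m + cpath K n i m ℓ)

/-- An arrow of the double quiver: `(false, i)` is the nonstar arrow α_i,
`(true, i)` is the star arrow α_i*. -/
def arrGen (n : ℕ) : Bool × ZMod n → PPGen n
  | (false, i) => PPGen.arr i
  | (true, i) => PPGen.star i

/-- The product in the free path algebra of the arrows in a word. -/
noncomputable def wordProd (w : List (Bool × ZMod n)) : PPFree K n :=
  (w.map fun a => FreeAlgebra.ι K (arrGen n a)).prod


section Aux
variable {K : Type} [Field K] {n : ℕ} [NeZero n]

lemma rel' {x y : PPFree K n} (h : PPRel K n x y) : pp K n x = pp K n y :=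
  RingQuot.mkAlgHom_rel K h

lemma ee (i j : ZMod n) :
    pp K n (E K n i) * pp K n (E K n j) = if i = j then pp K n (E K n i) else 0 := by
  have h := rel' (PPRel.vtx_mul (K := K) (n := n) i j)
  rw [map_mul, apply_ite (pp K n), map_zero] at h
  exact h

lemma ea (i : ZMod n) : pp K n (E K n i) * pp K n (A K n i) = pp K n (A K n i) := by
  have h := rel' (PPRel.arr_left (K := K) (n := n) i); rwa [map_mul] at h

lemma ae (i : ZMod n) : pp K n (A K n i) * pp K n (E K n (i+1)) = pp K n (A K n i) := by
  have h := rel' (PPRel.arr_right (K := K) (n := n) i); rwa [map_mul] at h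

lemma ea' (i j : ZMod n) (h : j ≠ i) : pp K n (E K n j) * pp K n (A K n i) = 0 := by
  have h' := rel' (PPRel.arr_left' (K := K) (n := n) i j h)
  rwa [map_mul, map_zero] at h'

lemma ae' (i j : ZMod n) (h : j ≠ i + 1) : pp K n (A K n i) * pp K n (E K n j) = 0 := by
  have h' := rel' (PPRel.arr_right' (K := K) (n := n) i j h)
  rwa [map_mul, map_zero] at h'

lemma es (i : ZMod n) : pp K n (E K n (i+1)) * pp K n (S K n i) = pp K n (S K n i) := by
  have h := rel' (PPRel.star_left (K := K) (n := n) i); rwa [map_mul] at h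

lemma se (i : ZMod n) : pp K n (S K n i) * pp K n (E K n i) = pp K n (S K n i) := by
  have h := rel' (PPRel.star_right (K := K) (n := n) i); rwa [map_mul] at h

lemma es' (i j : ZMod n) (h : j ≠ i + 1) : pp K n (E K n j) * pp K n (S K n i) = 0 := by
  have h' := rel' (PPRel.star_left' (K := K) (n := n) i j h)
  rwa [map_mul, map_zero] at h'

lemma se' (i j : ZMod n) (h : j ≠ i) : pp K n (S K n i) * pp K n (E K n j) = 0 := by
  have h' := rel' (PPRel.star_right' (K := K) (n := n) i j h)
  rwa [map_mul, map_zero] at h'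

lemma scomm (j : ZMod n) :
    pp K n (S K n j) * pp K n (A K n j)
      = pp K n (A K n (j+1)) * pp K n (S K n (j+1)) := by
  have h0 : (∑ i : ZMod n,
      (pp K n (A K n i) * pp K n (S K n i) - pp K n (S K n i) * pp K n (A K n i))) = 0 := by
    have h := rel' (PPRel.preproj (K := K) (n := n))
    rw [map_sum, map_zero] at h
    simpa [map_sub, map_mul] using h
  have h1 : (∑ i : ZMod n, pp K n (E K n (j+1)) *
      (pp K n (A K n i) * pp K n (S K n i) - pp K n (S K n i) * pp K n (A K n i)) *
      pp K n (E K n (j+1))) = 0 := by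
    rw [← Finset.sum_mul, ← Finset.mul_sum, h0, mul_zero, zero_mul]
  have key : ∀ i : ZMod n, pp K n (E K n (j+1)) *
      (pp K n (A K n i) * pp K n (S K n i) - pp K n (S K n i) * pp K n (A K n i)) *
      pp K n (E K n (j+1))
      = (if i = j+1 then pp K n (A K n (j+1)) * pp K n (S K n (j+1)) else 0)
        - (if i = j then pp K n (S K n j) * pp K n (A K n j) else 0) := by
    intro i
    rw [mul_sub, sub_mul]
    congr 1
    · by_cases h : i = j + 1
      · subst h
        rw [if_pos rfl, ← mul_assoc, ea, mul_assoc, se]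
      · rw [if_neg h, ← mul_assoc, ea' i (j+1) (Ne.symm h), zero_mul, zero_mul]
    · by_cases h : i = j
      · subst h
        rw [if_pos rfl, ← mul_assoc, es, mul_assoc, ae]
      · rw [if_neg h, ← mul_assoc, es' i (j+1) (fun hc => (Ne.symm h) (add_right_cancel hc)), zero_mul, zero_mul]
  rw [Finset.sum_congr rfl (fun i _ => key i), Finset.sum_sub_distrib,
    Finset.sum_ite_eq' Finset.univ (j+1), Finset.sum_ite_eq' Finset.univ j,
    if_pos (Finset.mem_univ _), if_pos (Finset.mem_univ _), sub_eq_zero] at h1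
  exact h1.symm

lemma e_aPath (i : ZMod n) (ℓ : ℕ) :
    pp K n (E K n i) * pp K n (aPath K n i ℓ) = pp K n (aPath K n i ℓ) := by
  cases ℓ with
  | zero => simp only [aPath]; rw [ee, if_pos rfl]
  | succ ℓ => simp only [aPath]; rw [map_mul, ← mul_assoc, ea]

lemma e_sPath (j : ZMod n) (m : ℕ) :
    pp K n (E K n j) * pp K n (sPath K n j m) = pp K n (sPath K n j m) := by
  cases m with
  | zero => simp only [sPath]; rw [ee, if_pos rfl]
  | succ m =>
    simp only [sPath]
    have h := es (K := K) (n := n) (j - 1)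
    rw [sub_add_cancel] at h
    rw [map_mul, ← mul_assoc, h]

lemma cpath_def (i : ZMod n) (ℓ m : ℕ) :
    cpath K n i ℓ m = pp K n (aPath K n i ℓ) * pp K n (sPath K n (i + (ℓ : ZMod n)) m) := by
  rw [cpath, map_mul]

lemma cpath_e (i : ZMod n) (ℓ m : ℕ) :
    cpath K n i ℓ m = pp K n (E K n i) * cpath K n i ℓ m := by
  rw [cpath_def, ← mul_assoc, e_aPath]

lemma arr_cpath (j : ZMod n) (ℓ m : ℕ) :
    pp K n (A K n j) * cpath K n (j+1) ℓ m = cpath K n j (ℓ+1) m := by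
  have hv : (j : ZMod n) + ((ℓ+1 : ℕ) : ZMod n) = (j+1) + (ℓ : ℕ) := by push_cast; ring
  rw [cpath_def, cpath_def, hv]
  simp only [aPath]
  rw [map_mul, mul_assoc]

lemma star_cpath : ∀ (ℓ : ℕ) (j : ZMod n) (m : ℕ),
    pp K n (S K n j) * cpath K n j ℓ m = cpath K n (j+1) ℓ (m+1) := by
  intro ℓ
  induction ℓ with
  | zero =>
    intro j m
    have hs : sPath K n (j+1) (m+1) = S K n j * sPath K n j m := by
      simp only [sPath, add_sub_cancel_right]
    rw [cpath_def, cpath_def]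
    simp only [aPath, Nat.cast_zero, add_zero]
    rw [e_sPath, e_sPath, hs, map_mul]
  | succ ℓ ih =>
    intro j m
    rw [← arr_cpath j ℓ m, ← mul_assoc, scomm, mul_assoc, ih, arr_cpath]

lemma a_cpath_ne (j i : ZMod n) (ℓ m : ℕ) (h : i ≠ j + 1) :
    pp K n (A K n j) * cpath K n i ℓ m = 0 := by
  rw [cpath_e, ← mul_assoc, ae' j i h, zero_mul]

lemma s_cpath_ne (j i : ZMod n) (ℓ m : ℕ) (h : i ≠ j) :
    pp K n (S K n j) * cpath K n i ℓ m = 0 := by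
  rw [cpath_e, ← mul_assoc, se' j i h, zero_mul]

lemma base_a (j : ZMod n) : pp K n (A K n j) = cpath K n j 1 0 := by
  rw [cpath_def]
  simp only [aPath, sPath, Nat.cast_one, map_mul]
  rw [ae, ae]

lemma base_s (j : ZMod n) : pp K n (S K n j) = cpath K n (j+1) 0 1 := by
  rw [cpath_def]
  simp only [aPath, sPath, Nat.cast_zero, add_zero, add_sub_cancel_right, map_mul]
  rw [se, es]

@[simp] lemma arrGen_false (i : ZMod n) : arrGen n (false, i) = PPGen.arr i := rfl
@[simp] lemma arrGen_true (i : ZMod n) : arrGen n (true, i) = PPGen.star i := rfl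

lemma step (b : Bool × ZMod n) (i : ZMod n) (ℓ m : ℕ) :
    pp K n (FreeAlgebra.ι K (arrGen n b)) * cpath K n i ℓ m = 0 ∨
    ∃ i' ℓ' m', ℓ' + m' = ℓ + m + 1 ∧
      pp K n (FreeAlgebra.ι K (arrGen n b)) * cpath K n i ℓ m = cpath K n i' ℓ' m' := by
  obtain ⟨bb, j⟩ := b
  cases bb
  · rw [show FreeAlgebra.ι K (arrGen n (false, j)) = A K n j from rfl]
    by_cases h : i = j + 1
    · exact Or.inr ⟨j, ℓ+1, m, by omega, by rw [h]; exact arr_cpath j ℓ m⟩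
    · exact Or.inl (a_cpath_ne j i ℓ m h)
  · rw [show FreeAlgebra.ι K (arrGen n (true, j)) = S K n j from rfl]
    by_cases h : i = j
    · exact Or.inr ⟨j+1, ℓ, m+1, by omega, by rw [h]; exact star_cpath ℓ j m⟩
    · exact Or.inl (s_cpath_ne j i ℓ m h)

lemma wordProd_cons (b : Bool × ZMod n) (w : List (Bool × ZMod n)) :
    wordProd K n (b :: w) = FreeAlgebra.ι K (arrGen n b) * wordProd K n w := by
  simp [wordProd]

lemma main : ∀ (w : List (Bool × ZMod n)), w ≠ [] →
    pp K n (wordProd K n w) = 0 ∨ ∃ i ℓ m, ℓ + m = w.length ∧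
      pp K n (wordProd K n w) = cpath K n i ℓ m := by
  intro w
  induction w with
  | nil => intro h; exact absurd rfl h
  | cons b w ih =>
    intro _
    rcases w with _ | ⟨c, w'⟩
    · right
      obtain ⟨bb, j⟩ := b
      cases bb
      · refine ⟨j, 1, 0, rfl, ?_⟩
        rw [wordProd_cons, show FreeAlgebra.ι K (arrGen n (false, j)) = A K n j from rfl]
        simp only [wordProd, List.map_nil, List.prod_nil, mul_one]
        exact base_a j
      · refine ⟨j+1, 0, 1, rfl, ?_⟩
        rw [wordProd_cons, show FreeAlgebra.ι K (arrGen n (true, j)) = S K n j from rfl]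
        simp only [wordProd, List.map_nil, List.prod_nil, mul_one]
        exact base_s j
    · rcases ih (List.cons_ne_nil c w') with h0 | ⟨i, ℓ, m, hlen, heq⟩
      · left
        rw [wordProd_cons, map_mul, h0, mul_zero]
      · rw [wordProd_cons, map_mul, heq]
        rcases step (K := K) (n := n) b i ℓ m with h0 | ⟨i', ℓ', m', hlen', heq'⟩
        · exact Or.inl h0
        · exact Or.inr ⟨i', ℓ', m', by simp at hlen ⊢; omega, heq'⟩
end Aux

/-- Structure Lemma: every nonzero nonconstant monomial of Π_{Ã_{n-1}}
equals a product of nonstar arrows followed by star arrows. -/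
theorem statement2 (h3 : 3 ≤ n) (w : List (Bool × ZMod n)) (hw : w ≠ [])
    (hnz : pp K n (wordProd K n w) ≠ 0) :
    ∃ (i : ZMod n) (ℓ m : ℕ), ℓ + m = w.length ∧
      pp K n (wordProd K n w) = cpath K n i ℓ m := by
  rcases main (K := K) (n := n) w hw with h0 | h
  · exact absurd h0 hnz
  · exact h
end

section
/- Let σ be a quiver automorphism of the double Q̄ of a quiver Q such that Q̄ is schurian. If σ is star-preserving (maps nonstar arrows to nonstar arrows and star arrows to star arrows), then the induced graded automorphism of kQ̄ sends the preprojective relation Ω = Σ_{α∈Q_1}(αα* − α*α) to Ω; if σ is star-inverting (swaps nonstar and star arrows), then it sends Ω to −Ω. In either case σ descends to a graded automorphism of the preprojective algebra Π_Q = kQ̄/(Ω). -/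
open scoped BigOperators

variable (K : Type) [Field K] (V E : Type) [Fintype V] [Fintype E] [DecidableEq V]
  (s t : E → V)

/-- Source function of the double quiver Q̄: `Sum.inl a` is the original (nonstar)
arrow `a`, `Sum.inr a` is its reverse (star) arrow `a*`. -/
def ds : E ⊕ E → V
  | Sum.inl a => s a
  | Sum.inr a => t a

/-- Target function of the double quiver Q̄. -/
def dt : E ⊕ E → V
  | Sum.inl a => t a
  | Sum.inr a => s a

abbrev DblFree := FreeAlgebra K (V ⊕ (E ⊕ E))

noncomputable def gv (v : V) : DblFree K V E := FreeAlgebra.ι K (Sum.inl v)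
noncomputable def ga (a : E ⊕ E) : DblFree K V E := FreeAlgebra.ι K (Sum.inr a)

/-- The preprojective relation Ω = Σ_{α ∈ Q_1} (α α* − α* α) in the path algebra kQ̄. -/
noncomputable def Omega : DblFree K V E :=
  ∑ a : E, (ga K V E (Sum.inl a) * ga K V E (Sum.inr a)
    - ga K V E (Sum.inr a) * ga K V E (Sum.inl a))

/-- Defining relations of the preprojective algebra Π_Q = kQ̄/(Ω): the path-algebra
relations of the double quiver, together with Ω = 0. -/
inductive DRel : DblFree K V E → DblFree K V E → Prop
  | vtx_mul (u v : V) :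
      DRel (gv K V E u * gv K V E v) (if u = v then gv K V E u else 0)
  | vtx_sum : DRel (∑ v : V, gv K V E v) 1
  | src (a : E ⊕ E) : DRel (gv K V E (ds V E s t a) * ga K V E a) (ga K V E a)
  | tgt (a : E ⊕ E) : DRel (ga K V E a * gv K V E (dt V E s t a)) (ga K V E a)
  | src' (a : E ⊕ E) (v : V) : v ≠ ds V E s t a → DRel (gv K V E v * ga K V E a) 0
  | tgt' (a : E ⊕ E) (v : V) : v ≠ dt V E s t a → DRel (ga K V E a * gv K V E v) 0
  | preproj : DRel (Omega K V E) 0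

/-- The preprojective algebra Π_Q. -/
abbrev DblPre := RingQuot (DRel K V E s t)

noncomputable def dpp : DblFree K V E →ₐ[K] DblPre K V E s t :=
  RingQuot.mkAlgHom K (DRel K V E s t)

/-- The graded algebra endomorphism of kQ̄ induced by a quiver automorphism
(σV, σA) of the double quiver Q̄. -/
noncomputable def indMap (σV : Equiv.Perm V) (σA : Equiv.Perm (E ⊕ E)) :
    DblFree K V E →ₐ[K] DblFree K V E :=
  FreeAlgebra.lift K fun x => FreeAlgebra.ι K (Sum.map σV σA x)

lemma indMap_gv (σV : Equiv.Perm V) (σA : Equiv.Perm (E ⊕ E)) (v : V) :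
    indMap K V E σV σA (gv K V E v) = gv K V E (σV v) := by
  simp [indMap, gv, Sum.map]

lemma indMap_ga (σV : Equiv.Perm V) (σA : Equiv.Perm (E ⊕ E)) (a : E ⊕ E) :
    indMap K V E σV σA (ga K V E a) = ga K V E (σA a) := by
  simp [indMap, ga, Sum.map]

lemma indMap_omega_pres
    (schurian : Function.Injective fun a : E ⊕ E => (ds V E s t a, dt V E s t a))
    (σV : Equiv.Perm V) (σA : Equiv.Perm (E ⊕ E))
    (compat : ∀ a : E ⊕ E, ds V E s t (σA a) = σV (ds V E s t a) ∧
      dt V E s t (σA a) = σV (dt V E s t a))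
    (h1 : ∀ e : E, ∃ e', σA (Sum.inl e) = Sum.inl e') :
    indMap K V E σV σA (Omega K V E) = Omega K V E := by
  choose f hf using h1
  have hs : ∀ e, s (f e) = σV (s e) := by
    intro e
    have := (compat (Sum.inl e)).1
    rw [hf e] at this
    exact this
  have ht : ∀ e, t (f e) = σV (t e) := by
    intro e
    have := (compat (Sum.inl e)).2
    rw [hf e] at this
    exact this
  have hf' : ∀ e, σA (Sum.inr e) = Sum.inr (f e) := by
    intro e
    apply schurian
    have h1 := (compat (Sum.inr e)).1
    have h2 := (compat (Sum.inr e)).2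
    show (ds V E s t (σA (Sum.inr e)), dt V E s t (σA (Sum.inr e)))
      = (ds V E s t (Sum.inr (f e)), dt V E s t (Sum.inr (f e)))
    rw [h1, h2]
    show (σV (t e), σV (s e)) = (t (f e), s (f e))
    rw [hs, ht]
  have finj : Function.Injective f := by
    intro a b hab
    have : σA (Sum.inl a) = σA (Sum.inl b) := by rw [hf, hf, hab]
    simpa using σA.injective this
  have fbij : Function.Bijective f := Finite.injective_iff_bijective.mp finj
  rw [Omega, map_sum]
  simp only [map_sub, map_mul, indMap_ga, hf, hf']
  exact Equiv.sum_comp (Equiv.ofBijective f fbij)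
    (fun a => ga K V E (Sum.inl a) * ga K V E (Sum.inr a)
      - ga K V E (Sum.inr a) * ga K V E (Sum.inl a))

lemma indMap_omega_inv
    (schurian : Function.Injective fun a : E ⊕ E => (ds V E s t a, dt V E s t a))
    (σV : Equiv.Perm V) (σA : Equiv.Perm (E ⊕ E))
    (compat : ∀ a : E ⊕ E, ds V E s t (σA a) = σV (ds V E s t a) ∧
      dt V E s t (σA a) = σV (dt V E s t a))
    (h1 : ∀ e : E, ∃ e', σA (Sum.inl e) = Sum.inr e') :
    indMap K V E σV σA (Omega K V E) = - Omega K V E := by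
  choose f hf using h1
  have hs : ∀ e, t (f e) = σV (s e) := by
    intro e
    have := (compat (Sum.inl e)).1
    rw [hf e] at this
    exact this
  have ht : ∀ e, s (f e) = σV (t e) := by
    intro e
    have := (compat (Sum.inl e)).2
    rw [hf e] at this
    exact this
  have hf' : ∀ e, σA (Sum.inr e) = Sum.inl (f e) := by
    intro e
    apply schurian
    have h1 := (compat (Sum.inr e)).1
    have h2 := (compat (Sum.inr e)).2
    show (ds V E s t (σA (Sum.inr e)), dt V E s t (σA (Sum.inr e)))
      = (ds V E s t (Sum.inl (f e)), dt V E s t (Sum.inl (f e)))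
    rw [h1, h2]
    show (σV (t e), σV (s e)) = (s (f e), t (f e))
    rw [hs, ht]
  have finj : Function.Injective f := by
    intro a b hab
    have : σA (Sum.inl a) = σA (Sum.inl b) := by rw [hf, hf, hab]
    simpa using σA.injective this
  have fbij : Function.Bijective f := Finite.injective_iff_bijective.mp finj
  rw [Omega, map_sum]
  simp only [map_sub, map_mul, indMap_ga, hf, hf']
  rw [← Finset.sum_neg_distrib]
  rw [← Equiv.sum_comp (Equiv.ofBijective f fbij)
    (fun a => -(ga K V E (Sum.inl a) * ga K V E (Sum.inr a)
      - ga K V E (Sum.inr a) * ga K V E (Sum.inl a)))]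
  apply Finset.sum_congr rfl
  intro a _
  simp only [Equiv.ofBijective_apply, neg_sub]

lemma descend (σV : Equiv.Perm V) (σA : Equiv.Perm (E ⊕ E))
    (compat : ∀ a : E ⊕ E, ds V E s t (σA a) = σV (ds V E s t a) ∧
      dt V E s t (σA a) = σV (dt V E s t a))
    (hΩ : dpp K V E s t (indMap K V E σV σA (Omega K V E)) = 0) :
    ∃ τ : DblPre K V E s t →ₐ[K] DblPre K V E s t,
      ∀ x : DblFree K V E,
        τ (dpp K V E s t x) = dpp K V E s t (indMap K V E σV σA x) := by
  have h0 : ∀ {x y : DblFree K V E}, DRel K V E s t x y →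
      dpp K V E s t x = dpp K V E s t y := by
    intro x y hxy
    exact RingQuot.mkAlgHom_rel K hxy
  have hrel : ∀ ⦃x y : DblFree K V E⦄, DRel K V E s t x y →
      ((dpp K V E s t).comp (indMap K V E σV σA)) x
        = ((dpp K V E s t).comp (indMap K V E σV σA)) y := by
    intro x y h
    induction h with
    | vtx_mul u v =>
      simp only [AlgHom.coe_comp, Function.comp_apply]
      have hind : indMap K V E σV σA (gv K V E u * gv K V E v)
          = gv K V E (σV u) * gv K V E (σV v) := by
        rw [map_mul, indMap_gv, indMap_gv]
      rw [hind]
      by_cases huv : u = v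
      · subst huv
        have := h0 (DRel.vtx_mul (σV u) (σV u))
        rw [if_pos rfl] at this
        rw [this, if_pos rfl, indMap_gv]
      · have := h0 (DRel.vtx_mul (σV u) (σV v))
        rw [if_neg (fun hh => huv (σV.injective hh))] at this
        rw [this, if_neg huv]
        simp only [map_zero]
    | vtx_sum =>
      simp only [AlgHom.coe_comp, Function.comp_apply, map_one]
      have hind : indMap K V E σV σA (∑ v : V, gv K V E v) = ∑ v : V, gv K V E v := by
        rw [map_sum]
        simp only [indMap_gv]
        exact Equiv.sum_comp σV (fun v => gv K V E v)
      rw [hind]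
      have := h0 (DRel.vtx_sum (K := K) (s := s) (t := t))
      rw [this, map_one]
    | src a =>
      simp only [AlgHom.coe_comp, Function.comp_apply]
      have hind : indMap K V E σV σA (gv K V E (ds V E s t a) * ga K V E a)
          = gv K V E (ds V E s t (σA a)) * ga K V E (σA a) := by
        rw [map_mul, indMap_gv, indMap_ga, (compat a).1]
      rw [hind, indMap_ga]
      exact h0 (DRel.src (σA a))
    | tgt a =>
      simp only [AlgHom.coe_comp, Function.comp_apply]
      have hind : indMap K V E σV σA (ga K V E a * gv K V E (dt V E s t a))
          = ga K V E (σA a) * gv K V E (dt V E s t (σA a)) := by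
        rw [map_mul, indMap_gv, indMap_ga, (compat a).2]
      rw [hind, indMap_ga]
      exact h0 (DRel.tgt (σA a))
    | src' a v hv =>
      simp only [AlgHom.coe_comp, Function.comp_apply, map_zero]
      have hind : indMap K V E σV σA (gv K V E v * ga K V E a)
          = gv K V E (σV v) * ga K V E (σA a) := by
        rw [map_mul, indMap_gv, indMap_ga]
      have hne : σV v ≠ ds V E s t (σA a) := by
        rw [(compat a).1]
        exact fun hh => hv (σV.injective hh)
      rw [hind, h0 (DRel.src' (σA a) (σV v) hne), map_zero]
    | tgt' a v hv =>
      simp only [AlgHom.coe_comp, Function.comp_apply, map_zero]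
      have hind : indMap K V E σV σA (ga K V E a * gv K V E v)
          = ga K V E (σA a) * gv K V E (σV v) := by
        rw [map_mul, indMap_gv, indMap_ga]
      have hne : σV v ≠ dt V E s t (σA a) := by
        rw [(compat a).2]
        exact fun hh => hv (σV.injective hh)
      rw [hind, h0 (DRel.tgt' (σA a) (σV v) hne), map_zero]
    | preproj =>
      simp only [AlgHom.coe_comp, Function.comp_apply, map_zero]
      exact hΩ
  refine ⟨RingQuot.liftAlgHom K ⟨(dpp K V E s t).comp (indMap K V E σV σA), hrel⟩, ?_⟩
  intro x
  show RingQuot.liftAlgHom K ⟨(dpp K V E s t).comp (indMap K V E σV σA), hrel⟩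
      (RingQuot.mkAlgHom K (DRel K V E s t) x) = _
  rw [RingQuot.liftAlgHom_mkAlgHom_apply]
  rfl

lemma compat_symm (σV : Equiv.Perm V) (σA : Equiv.Perm (E ⊕ E))
    (compat : ∀ a : E ⊕ E, ds V E s t (σA a) = σV (ds V E s t a) ∧
      dt V E s t (σA a) = σV (dt V E s t a)) :
    ∀ a : E ⊕ E, ds V E s t (σA.symm a) = σV.symm (ds V E s t a) ∧
      dt V E s t (σA.symm a) = σV.symm (dt V E s t a) := by
  intro a
  have h1 := (compat (σA.symm a)).1
  have h2 := (compat (σA.symm a)).2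
  rw [σA.apply_symm_apply] at h1 h2
  constructor
  · rw [h1, σV.symm_apply_apply]
  · rw [h2, σV.symm_apply_apply]

lemma indMap_symm_comp (σV : Equiv.Perm V) (σA : Equiv.Perm (E ⊕ E))
    (x : DblFree K V E) :
    indMap K V E σV.symm σA.symm (indMap K V E σV σA x) = x := by
  have : (indMap K V E σV.symm σA.symm).comp (indMap K V E σV σA)
      = AlgHom.id K (DblFree K V E) := by
    apply FreeAlgebra.hom_ext
    funext z
    cases z <;> simp [indMap, Sum.map]
  calc indMap K V E σV.symm σA.symm (indMap K V E σV σA x)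
      = ((indMap K V E σV.symm σA.symm).comp (indMap K V E σV σA)) x := rfl
    _ = x := by rw [this]; rfl

/-- for a quiver automorphism σ = (σV, σA) of the schurian double quiver
Q̄, if σ is star-preserving then the induced automorphism of kQ̄ sends Ω to Ω; if σ is
star-inverting, it sends Ω to −Ω; and in either case σ descends to a graded algebra
automorphism of Π_Q = kQ̄/(Ω). -/
theorem statement4
    (schurian : Function.Injective fun a : E ⊕ E => (ds V E s t a, dt V E s t a))
    (σV : Equiv.Perm V) (σA : Equiv.Perm (E ⊕ E))
    (compat : ∀ a : E ⊕ E, ds V E s t (σA a) = σV (ds V E s t a) ∧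
      dt V E s t (σA a) = σV (dt V E s t a)) :
    (((∀ e : E, ∃ e', σA (Sum.inl e) = Sum.inl e') ∧
        (∀ e : E, ∃ e', σA (Sum.inr e) = Sum.inr e')) →
      indMap K V E σV σA (Omega K V E) = Omega K V E) ∧
    (((∀ e : E, ∃ e', σA (Sum.inl e) = Sum.inr e') ∧
        (∀ e : E, ∃ e', σA (Sum.inr e) = Sum.inl e')) →
      indMap K V E σV σA (Omega K V E) = - Omega K V E) ∧
    ((((∀ e : E, ∃ e', σA (Sum.inl e) = Sum.inl e') ∧
        (∀ e : E, ∃ e', σA (Sum.inr e) = Sum.inr e')) ∨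
      ((∀ e : E, ∃ e', σA (Sum.inl e) = Sum.inr e') ∧
        (∀ e : E, ∃ e', σA (Sum.inr e) = Sum.inl e'))) →
      ∃ τ : DblPre K V E s t ≃ₐ[K] DblPre K V E s t,
        ∀ x : DblFree K V E,
          τ (dpp K V E s t x) = dpp K V E s t (indMap K V E σV σA x)) := by
  refine ⟨fun h => indMap_omega_pres K V E s t schurian σV σA compat h.1,
    fun h => indMap_omega_inv K V E s t schurian σV σA compat h.1, ?_⟩
  intro h
  -- forward Ω-compatibility
  have hΩfwd : dpp K V E s t (indMap K V E σV σA (Omega K V E)) = 0 := by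
    have h0 : dpp K V E s t (Omega K V E) = 0 := by
      have := RingQuot.mkAlgHom_rel K (DRel.preproj (K := K) (s := s) (t := t))
      simpa [dpp] using this
    rcases h with h | h
    · rw [indMap_omega_pres K V E s t schurian σV σA compat h.1, h0]
    · rw [indMap_omega_inv K V E s t schurian σV σA compat h.1, map_neg, h0, neg_zero]
  -- the inverse automorphism is also star-preserving / star-inverting
  have hinv : (∀ e : E, ∃ e', σA.symm (Sum.inl e) = Sum.inl e') ∨
      (∀ e : E, ∃ e', σA.symm (Sum.inl e) = Sum.inr e') := by
    rcases h with h | h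
    · left
      intro e
      rcases hc : σA.symm (Sum.inl e) with e'' | e''
      · exact ⟨e'', rfl⟩
      · exfalso
        obtain ⟨e₃, he₃⟩ := h.2 e''
        have : σA (σA.symm (Sum.inl e)) = Sum.inr e₃ := by rw [hc, he₃]
        rw [σA.apply_symm_apply] at this
        exact Sum.inl_ne_inr this
    · right
      intro e
      rcases hc : σA.symm (Sum.inl e) with e'' | e''
      · exfalso
        obtain ⟨e₃, he₃⟩ := h.1 e''
        have : σA (σA.symm (Sum.inl e)) = Sum.inr e₃ := by rw [hc, he₃]
        rw [σA.apply_symm_apply] at this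
        exact Sum.inl_ne_inr this
      · exact ⟨e'', rfl⟩
  have compat' := compat_symm V E s t σV σA compat
  have hΩbwd : dpp K V E s t (indMap K V E σV.symm σA.symm (Omega K V E)) = 0 := by
    have h0 : dpp K V E s t (Omega K V E) = 0 := by
      have := RingQuot.mkAlgHom_rel K (DRel.preproj (K := K) (s := s) (t := t))
      simpa [dpp] using this
    rcases hinv with h' | h'
    · rw [indMap_omega_pres K V E s t schurian σV.symm σA.symm compat' h', h0]
    · rw [indMap_omega_inv K V E s t schurian σV.symm σA.symm compat' h', map_neg, h0,
        neg_zero]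
  obtain ⟨τ₁, hτ₁⟩ := descend K V E s t σV σA compat hΩfwd
  obtain ⟨τ₂, hτ₂⟩ := descend K V E s t σV.symm σA.symm compat' hΩbwd
  have hcomp1 : τ₂.comp τ₁ = AlgHom.id K (DblPre K V E s t) := by
    apply AlgHom.ext
    intro y
    obtain ⟨x, rfl⟩ := RingQuot.mkAlgHom_surjective K (DRel K V E s t) y
    show τ₂ (τ₁ (dpp K V E s t x)) = dpp K V E s t x
    rw [hτ₁, hτ₂, indMap_symm_comp]
  have hcomp2 : τ₁.comp τ₂ = AlgHom.id K (DblPre K V E s t) := by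
    apply AlgHom.ext
    intro y
    obtain ⟨x, rfl⟩ := RingQuot.mkAlgHom_surjective K (DRel K V E s t) y
    show τ₁ (τ₂ (dpp K V E s t x)) = dpp K V E s t x
    rw [hτ₂, hτ₁]
    have : indMap K V E σV σA (indMap K V E σV.symm σA.symm x) = x := by
      have h' := indMap_symm_comp K V E σV.symm σA.symm x
      simpa using h'
    rw [this]
  exact ⟨AlgEquiv.ofAlgHom τ₁ τ₂ hcomp2 hcomp1, hτ₁⟩
end

section
/- In the preprojective algebra R = Π_{Ã_{n-1}}, the orbit sum O(1,1) = Σ_{i=0}^{n-1} α_i α_i* satisfies O(1,1)^m = O(m,m) for all m ≥ 1, where O(m,m) = Σ_{i=0}^{n-1} α_i ⋯ α_{i+m−1} α_{i+m−1}* ⋯ α_i*. -/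
open scoped BigOperators

variable (K : Type) [Field K] (n : ℕ) [NeZero n]

/-! ### Auxiliary lemmas -/

section Aux

noncomputable def qE (i : ZMod n) : Preproj K n := pp K n (E K n i)
noncomputable def qA (i : ZMod n) : Preproj K n := pp K n (A K n i)
noncomputable def qS (i : ZMod n) : Preproj K n := pp K n (S K n i)
noncomputable def qP (i : ZMod n) (ℓ : ℕ) : Preproj K n := pp K n (aPath K n i ℓ)
noncomputable def qQ (j : ZMod n) (m : ℕ) : Preproj K n := pp K n (sPath K n j m)

lemma ppRel {x y : PPFree K n} (w : PPRel K n x y) : pp K n x = pp K n y :=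
  RingQuot.mkAlgHom_rel K w

lemma qE_mul (i j : ZMod n) : qE K n i * qE K n j = if i = j then qE K n i else 0 := by
  have := ppRel K n (PPRel.vtx_mul i j)
  rw [map_mul] at this
  split_ifs with h <;> simp_all [qE]

lemma qE_qA (i : ZMod n) : qE K n i * qA K n i = qA K n i := by
  have := ppRel K n (PPRel.arr_left (K := K) (n := n) i)
  rw [map_mul] at this; exact this

lemma qA_qE (i : ZMod n) : qA K n i * qE K n (i + 1) = qA K n i := by
  have := ppRel K n (PPRel.arr_right (K := K) (n := n) i)
  rw [map_mul] at this; exact this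

lemma qE_qA' (i j : ZMod n) (h : j ≠ i) : qE K n j * qA K n i = 0 := by
  have := ppRel K n (PPRel.arr_left' (K := K) (n := n) i j h)
  rw [map_mul, map_zero] at this; exact this

lemma qA_qE' (i j : ZMod n) (h : j ≠ i + 1) : qA K n i * qE K n j = 0 := by
  have := ppRel K n (PPRel.arr_right' (K := K) (n := n) i j h)
  rw [map_mul, map_zero] at this; exact this

lemma qE_qS (i : ZMod n) : qE K n (i + 1) * qS K n i = qS K n i := by
  have := ppRel K n (PPRel.star_left (K := K) (n := n) i)
  rw [map_mul] at this; exact this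

lemma qS_qE (i : ZMod n) : qS K n i * qE K n i = qS K n i := by
  have := ppRel K n (PPRel.star_right (K := K) (n := n) i)
  rw [map_mul] at this; exact this

lemma qE_qS' (i j : ZMod n) (h : j ≠ i + 1) : qE K n j * qS K n i = 0 := by
  have := ppRel K n (PPRel.star_left' (K := K) (n := n) i j h)
  rw [map_mul, map_zero] at this; exact this

lemma qS_qE' (i j : ZMod n) (h : j ≠ i) : qS K n i * qE K n j = 0 := by
  have := ppRel K n (PPRel.star_right' (K := K) (n := n) i j h)
  rw [map_mul, map_zero] at this; exact this

lemma omega_zero :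
    ∑ i : ZMod n, (qA K n i * qS K n i - qS K n i * qA K n i) = 0 := by
  have := ppRel K n (PPRel.preproj (K := K) (n := n))
  rw [map_sum, map_zero] at this
  simpa [map_sub, map_mul, qA, qS] using this

lemma preproj_local (j : ZMod n) :
    qA K n j * qS K n j = qS K n (j - 1) * qA K n (j - 1) := by
  have h0 : ∑ i : ZMod n,
      qE K n j * (qA K n i * qS K n i - qS K n i * qA K n i) * qE K n j = 0 := by
    have := omega_zero K n
    calc ∑ i : ZMod n,
        qE K n j * (qA K n i * qS K n i - qS K n i * qA K n i) * qE K n j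
        = qE K n j * (∑ i : ZMod n, (qA K n i * qS K n i - qS K n i * qA K n i))
            * qE K n j := by
          rw [Finset.mul_sum, Finset.sum_mul]
      _ = 0 := by rw [this, mul_zero, zero_mul]
  have hterm : ∀ i : ZMod n,
      qE K n j * (qA K n i * qS K n i - qS K n i * qA K n i) * qE K n j
        = (if i = j then qA K n j * qS K n j else 0)
          - (if i = j - 1 then qS K n (j - 1) * qA K n (j - 1) else 0) := by
    intro i
    rw [mul_sub, sub_mul]
    congr 1
    · by_cases h : i = j
      · subst h
        rw [if_pos rfl, ← mul_assoc, qE_qA, mul_assoc, qS_qE]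
      · rw [if_neg h, ← mul_assoc, qE_qA' K n i j (Ne.symm h), zero_mul, zero_mul]
    · by_cases h : i = j - 1
      · subst h
        have hj : j - 1 + 1 = j := by ring
        have h1 := qE_qS K n (j - 1)
        have h2 := qA_qE K n (j - 1)
        rw [hj] at h1 h2
        rw [if_pos rfl, ← mul_assoc, h1, mul_assoc, h2]
      · have h' : j ≠ i + 1 := by
          intro hc; exact h (by rw [hc]; ring)
        rw [if_neg h, ← mul_assoc, qE_qS' K n i j h', zero_mul, zero_mul]
  rw [Finset.sum_congr rfl (fun i _ => hterm i), Finset.sum_sub_distrib,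
    Finset.sum_ite_eq' Finset.univ j (fun _ => qA K n j * qS K n j),
    Finset.sum_ite_eq' Finset.univ (j - 1) (fun _ => qS K n (j - 1) * qA K n (j - 1)),
    if_pos (Finset.mem_univ _), if_pos (Finset.mem_univ _), sub_eq_zero] at h0
  exact h0

lemma qP_zero (i : ZMod n) : qP K n i 0 = qE K n i := rfl

lemma qP_succ (i : ZMod n) (ℓ : ℕ) :
    qP K n i (ℓ + 1) = qA K n i * qP K n (i + 1) ℓ := by
  simp [qP, aPath, map_mul, qA]

lemma qQ_zero (j : ZMod n) : qQ K n j 0 = qE K n j := rfl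

lemma qQ_succ (j : ZMod n) (m : ℕ) :
    qQ K n j (m + 1) = qS K n (j - 1) * qQ K n (j - 1) m := by
  simp [qQ, sPath, map_mul, qS]

lemma qP_succ' (i : ZMod n) (ℓ : ℕ) :
    qP K n i (ℓ + 1) = qP K n i ℓ * qA K n (i + (ℓ : ZMod n)) := by
  induction ℓ generalizing i with
  | zero =>
      rw [qP_succ, qP_zero, qP_zero]
      push_cast
      rw [add_zero, qE_qA, qA_qE]
  | succ ℓ ih =>
      rw [qP_succ, ih, qP_succ, mul_assoc]
      congr 2
      push_cast
      ring

lemma qQ_qE (j : ZMod n) (m : ℕ) :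
    qQ K n j m * qE K n (j - (m : ZMod n)) = qQ K n j m := by
  induction m generalizing j with
  | zero =>
      rw [qQ_zero]
      push_cast
      rw [sub_zero, qE_mul, if_pos rfl]
  | succ m ih =>
      rw [qQ_succ, mul_assoc]
      have : j - ((m + 1 : ℕ) : ZMod n) = (j - 1) - (m : ZMod n) := by
        push_cast; ring
      rw [this, ih]

lemma qQ_qE' (j k : ZMod n) (m : ℕ) (h : k ≠ j - (m : ZMod n)) :
    qQ K n j m * qE K n k = 0 := by
  induction m generalizing j with
  | zero =>
      rw [qQ_zero, qE_mul, if_neg]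
      intro hc
      exact h (by push_cast at h ⊢; rw [sub_zero, ← hc])
  | succ m ih =>
      rw [qQ_succ, mul_assoc, ih _ (by
        intro hc
        apply h
        rw [hc]; push_cast; ring), mul_zero]

lemma key_comm (m : ℕ) (j : ZMod n) :
    qQ K n j m * (qA K n (j - (m : ZMod n)) * qS K n (j - (m : ZMod n)))
      = qA K n j * qS K n j * qQ K n j m := by
  induction m generalizing j with
  | zero =>
      rw [qQ_zero]
      push_cast
      rw [sub_zero, ← mul_assoc, qE_qA, mul_assoc, qS_qE]
  | succ m ih =>
      have hcast : j - ((m + 1 : ℕ) : ZMod n) = (j - 1) - (m : ZMod n) := by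
        push_cast; ring
      rw [qQ_succ, hcast, mul_assoc, ih, preproj_local K n j]
      simp only [mul_assoc]

lemma cpath_eq (i : ZMod n) (ℓ m : ℕ) :
    cpath K n i ℓ m = qP K n i ℓ * qQ K n (i + (ℓ : ZMod n)) m := by
  simp [cpath, qP, qQ, map_mul]

lemma qP_one (i : ZMod n) : qP K n i 1 = qA K n i := by
  have := qP_succ' K n i 0
  rw [qP_zero] at this
  push_cast at this
  rw [add_zero, qE_qA] at this
  exact this

lemma qQ_one (j : ZMod n) : qQ K n j 1 = qS K n (j - 1) := by
  rw [qQ_succ, qQ_zero, qS_qE]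

lemma cpath_one (i : ZMod n) : cpath K n i 1 1 = qA K n i * qS K n i := by
  rw [cpath_eq, qP_one, qQ_one]
  push_cast
  rw [add_sub_cancel_right]

lemma cpath_step (i : ZMod n) (m : ℕ) :
    cpath K n i m m * (qA K n i * qS K n i) = cpath K n i (m + 1) (m + 1) := by
  have hk := key_comm K n m (i + (m : ZMod n))
  rw [show (i + (m : ZMod n)) - (m : ZMod n) = i from by ring] at hk
  have h1 : i + ((m + 1 : ℕ) : ZMod n) = (i + (m : ZMod n)) + 1 := by push_cast; ring
  rw [cpath_eq, cpath_eq, mul_assoc, hk, qP_succ', h1, qQ_succ, add_sub_cancel_right]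
  simp only [mul_assoc]

lemma collapse (m : ℕ) :
    (∑ i : ZMod n, cpath K n i m m) * (∑ j : ZMod n, qA K n j * qS K n j)
      = ∑ i : ZMod n, cpath K n i (m + 1) (m + 1) := by
  rw [Finset.sum_mul_sum]
  have hrow : ∀ i : ZMod n,
      ∑ j : ZMod n, cpath K n i m m * (qA K n j * qS K n j)
        = cpath K n i (m + 1) (m + 1) := by
    intro i
    rw [Finset.sum_eq_single i]
    · exact cpath_step K n i m
    · intro j _ hj
      rw [cpath_eq, mul_assoc, ← mul_assoc (qQ K n (i + (m : ZMod n)) m),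
        ← qE_qA K n j, ← mul_assoc (qQ K n (i + (m : ZMod n)) m),
        qQ_qE' K n (i + (m : ZMod n)) j m (by
          intro hc
          apply hj
          rw [hc]; ring)]
      simp
    · intro h
      exact absurd (Finset.mem_univ i) h
  exact Finset.sum_congr rfl fun i _ => hrow i

end Aux

/-- the orbit sum O(1,1) = Σ_i α_i α_i* satisfies O(1,1)^m = O(m,m) for
all m ≥ 1, where O(m,m) = Σ_i α_i ⋯ α_{i+m−1} α_{i+m−1}* ⋯ α_i*. -/
theorem statement9 (h3 : 3 ≤ n) (m : ℕ) (hm : 1 ≤ m) :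
    (∑ i : ZMod n, pp K n (A K n i * S K n i)) ^ m = ∑ i : ZMod n, cpath K n i m m := by
  have hgen : ∀ i : ZMod n, pp K n (A K n i * S K n i) = qA K n i * qS K n i := by
    intro i; rw [map_mul]; rfl
  induction m with
  | zero => omega
  | succ m ih =>
      rcases Nat.eq_or_lt_of_le hm with h1 | h1
      · simp only [← h1, pow_one]
        exact Finset.sum_congr rfl fun i _ => by rw [hgen, cpath_one]
      · have hm' : 1 ≤ m := Nat.lt_succ_iff.mp h1
        rw [pow_succ, ih hm']
        rw [← collapse K n m]
        congr 1
        exact Finset.sum_congr rfl fun i _ => hgen i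
end

section
/- The preprojective algebra R = Π_{Ã_{n-1}} is a free module over its invariant ring R^{D_n} of rank 2n, with basis {e_0, ..., e_{n−1}, α_0, ..., α_{n−1}}. -/
open scoped BigOperators

variable (K : Type) [Field K] (n : ℕ) [NeZero n]

/-- s_1 = O(1,0) = Σ_i (α_i + α_i*). -/
noncomputable def s1 : Preproj K n := pp K n (∑ i : ZMod n, (A K n i + S K n i))

/-- s_2 = O(2,0) = Σ_i (α_i α_{i+1} + α_i* α_{i−1}*). -/
noncomputable def s2 : Preproj K n :=
  pp K n (∑ i : ZMod n, (A K n i * A K n (i + 1) + S K n i * S K n (i - 1)))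

/-- The degree-d homogeneous component of Π_{Ã_{n-1}} (as a K-submodule): spanned by
the trivial paths for d = 0, and by the paths of length d for d ≥ 1. -/
noncomputable def homog (d : ℕ) : Submodule K (Preproj K n) :=
  if d = 0 then Submodule.span K (Set.range fun i : ZMod n => pp K n (E K n i))
  else Submodule.span K
    {x | ∃ w : List (Bool × ZMod n), w.length = d ∧ x = pp K n (wordProd K n w)}

/-- The subalgebra of D_n-invariants, i.e. elements fixed by (the automorphisms of
Π_{Ã_{n-1}} induced by) the rotation ρ and the reflection r. -/
noncomputable def fixDn (Pρ Pr : Preproj K n →ₐ[K] Preproj K n) :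
    Subalgebra K (Preproj K n) :=
  AlgHom.equalizer Pρ (AlgHom.id K (Preproj K n)) ⊓
    AlgHom.equalizer Pr (AlgHom.id K (Preproj K n))


/-!
The canonical paths `cpath i ℓ m` span `Π`, and the representation `α_i ↦ x E_{i,i+1}`,
`α_i* ↦ y E_{i+1,i}` sends them to the distinct monomial matrix units `x^ℓ y^m E_{i,i+ℓ-m}` of
`Mat_n(K[x,y])`, so it is faithful.

Existence: right multiplication by the invariants `s₁` and `λ = ∑ α_i α_i*` acts on canonical
paths by `(ℓ, m) ↦ (ℓ+1, m) + (ℓ, m+1)` and `(ℓ, m) ↦ (ℓ+1, m+1)`. Started from `e_i` and `α_i`,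
this recursion writes every canonical path as `e_i p + α_i q` with invariant `p, q`.

Uniqueness: multiplying a vanishing combination by `e_v` leaves `e_v γ + α_v δ = 0`. Rotating it
around the cycle and summing gives `γ + (∑ α_i) δ = 0`, and the reflection turns this into
`γ + (∑ α_i*) δ = 0`. Hence `(∑ α_i - ∑ α_i*) δ = 0`, which forces `δ = 0`: the matrix of
`∑ α_i - ∑ α_i*` specializes at `x = 1, y = 0` to a permutation matrix, so its determinant is
nonzero.
-/

theorem Submodule.eq_top_of_mul_mem {R A : Type*} [CommSemiring R] [Semiring A] [Algebra R A]
    {G : Set A} (hG : Algebra.adjoin R G = ⊤) (W : Submodule R A) (h1 : 1 ∈ W)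
    (hW : ∀ x ∈ W, ∀ g ∈ G, x * g ∈ W) : W = ⊤ := by
  suffices h : ∀ z : A, ∀ x ∈ W, x * z ∈ W from
    eq_top_iff'.mpr fun z => by simpa only [one_mul] using h z 1 h1
  intro z
  induction (hG ▸ Algebra.mem_top : z ∈ Algebra.adjoin R G) using Algebra.adjoin_induction with
  | mem g hg => exact fun x hx => hW x hx g hg
  | algebraMap r =>
    exact fun x hx => by simpa only [Algebra.commutes, Algebra.smul_def] using W.smul_mem r hx
  | add y z _ _ hy hz =>
    exact fun x hx => by simpa only [mul_add] using W.add_mem (hy x hx) (hz x hx)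
  | mul y z _ _ hy hz => exact fun x hx => by simpa only [mul_assoc] using hz _ (hy x hx)

namespace ZMod

variable {m : ℕ} [NeZero m]

theorem forall_of_add_one {P : ZMod m → Prop} {v : ZMod m} (hv : P v)
    (h : ∀ w, P w → P (w + 1)) (w : ZMod m) : P w := by
  have key : ∀ t : ℕ, P (v + t) := fun t => by
    induction t with
    | zero => simpa using hv
    | succ t ih => simpa [add_assoc] using h _ ih
  simpa using key (w - v).val

theorem sum_comp_add_one {M : Type*} [AddCommMonoid M] (f : ZMod m → M) :
    ∑ i, f (i + 1) = ∑ i, f i :=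
  Equiv.sum_comp (Equiv.addRight 1) f

theorem sum_comp_neg_sub_one {M : Type*} [AddCommMonoid M] (f : ZMod m → M) :
    ∑ i, f (-i - 1) = ∑ i, f i :=
  Equiv.sum_comp ((Equiv.neg _).trans (Equiv.subRight 1)) f

theorem finEquiv_apply (k : Fin m) : finEquiv m k = ((k : ℕ) : ZMod m) := by
  obtain ⟨l, rfl⟩ := Nat.exists_eq_succ_of_ne_zero (NeZero.ne m)
  exact (Fin.cast_val_eq_self k).symm

end ZMod

namespace Preproj

variable {K n}

noncomputable def e (i : ZMod n) : Preproj K n := pp K n (E K n i)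
noncomputable def a (i : ZMod n) : Preproj K n := pp K n (A K n i)
noncomputable def s (i : ZMod n) : Preproj K n := pp K n (S K n i)

section Relations

theorem pp_mul_eq_of_rel {x y z : PPFree K n} (h : PPRel K n (x * y) z) :
    pp K n x * pp K n y = pp K n z :=
  (map_mul _ x y).symm.trans (RingQuot.mkAlgHom_rel K h)

theorem e_mul_e (i j : ZMod n) : e (K := K) i * e j = if i = j then e i else 0 := by
  rw [e, e, pp_mul_eq_of_rel (PPRel.vtx_mul i j), apply_ite (pp K n), map_zero]

theorem sum_e : ∑ i : ZMod n, e (K := K) i = 1 :=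
  (map_sum (pp K n) _ _).symm.trans ((RingQuot.mkAlgHom_rel K PPRel.vtx_sum).trans (map_one _))

theorem e_mul_a (i j : ZMod n) : e (K := K) j * a i = if j = i then a i else 0 := by
  split_ifs with h
  · subst h
    exact pp_mul_eq_of_rel (PPRel.arr_left _)
  · exact (pp_mul_eq_of_rel (PPRel.arr_left' i j h)).trans (map_zero _)

theorem e_mul_a_self (i : ZMod n) : e (K := K) i * a i = a i := by
  rw [e_mul_a, if_pos rfl]

theorem a_mul_e (i j : ZMod n) : a (K := K) i * e j = if j = i + 1 then a i else 0 := by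
  split_ifs with h
  · subst h
    exact pp_mul_eq_of_rel (PPRel.arr_right i)
  · exact (pp_mul_eq_of_rel (PPRel.arr_right' i j h)).trans (map_zero _)

theorem e_mul_s (i j : ZMod n) : e (K := K) j * s i = if j = i + 1 then s i else 0 := by
  split_ifs with h
  · subst h
    exact pp_mul_eq_of_rel (PPRel.star_left i)
  · exact (pp_mul_eq_of_rel (PPRel.star_left' i j h)).trans (map_zero _)

theorem e_mul_s_self (i : ZMod n) : e (K := K) (i + 1) * s i = s i := by
  rw [e_mul_s, if_pos rfl]

theorem s_mul_e (i j : ZMod n) : s (K := K) i * e j = if j = i then s i else 0 := by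
  split_ifs with h
  · subst h
    exact pp_mul_eq_of_rel (PPRel.star_right _)
  · exact (pp_mul_eq_of_rel (PPRel.star_right' i j h)).trans (map_zero _)

theorem sum_a_mul_s_sub_s_mul_a :
    ∑ i : ZMod n, (a (K := K) i * s i - s i * a i) = 0 := by
  have h := RingQuot.mkAlgHom_rel K (PPRel.preproj (K := K) (n := n))
  simp only [map_sum, map_sub, map_mul, map_zero] at h
  exact h

theorem sum_a_mul_s : ∑ i : ZMod n, a (K := K) i * s i = ∑ i : ZMod n, s i * a i := by
  rw [← sub_eq_zero, ← Finset.sum_sub_distrib, sum_a_mul_s_sub_s_mul_a]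

theorem a_mul_s (i : ZMod n) : a (K := K) i * s i = s (i - 1) * a (i - 1) := by
  have h := congrArg (e i * ·) (sum_a_mul_s_sub_s_mul_a (K := K) (n := n))
  simp only [Finset.mul_sum, mul_sub, ← mul_assoc, e_mul_a, e_mul_s, ite_mul, zero_mul, mul_zero,
    Finset.sum_sub_distrib, ← sub_eq_iff_eq_add, Finset.sum_ite_eq, Finset.mem_univ, if_true] at h
  exact sub_eq_zero.mp h

theorem e_mul_sum_e_mul_add_a_mul (p q : ZMod n → Preproj K n) (v : ZMod n) :
    e v * ∑ i, (e i * p i + a i * q i) = e v * p v + a v * q v := by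
  simp only [Finset.mul_sum, mul_add, ← mul_assoc, e_mul_e, e_mul_a, ite_mul, zero_mul,
    Finset.sum_add_distrib, Finset.sum_ite_eq, Finset.mem_univ, if_true]

end Relations

section CanonicalPaths

theorem pp_aPath_zero (i : ZMod n) : pp K n (aPath K n i 0) = e i := rfl

theorem pp_aPath_succ (i : ZMod n) (ℓ : ℕ) :
    pp K n (aPath K n i (ℓ + 1)) = a i * pp K n (aPath K n (i + 1) ℓ) :=
  map_mul _ _ _

theorem pp_sPath_zero (j : ZMod n) : pp K n (sPath K n j 0) = e j := rfl

theorem pp_sPath_succ (j : ZMod n) (m : ℕ) :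
    pp K n (sPath K n j (m + 1)) = s (j - 1) * pp K n (sPath K n (j - 1) m) :=
  map_mul _ _ _

theorem pp_aPath_mul_a (i : ZMod n) (ℓ : ℕ) :
    pp K n (aPath K n i ℓ) * a (i + (ℓ : ZMod n)) = pp K n (aPath K n i (ℓ + 1)) := by
  induction ℓ generalizing i with
  | zero => simp only [pp_aPath_zero, pp_aPath_succ, Nat.cast_zero, add_zero, e_mul_a, a_mul_e,
      if_true]
  | succ ℓ ih =>
    rw [pp_aPath_succ, mul_assoc, Nat.cast_succ, ← add_assoc, add_right_comm, ih,
      pp_aPath_succ i (ℓ + 1)]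

theorem pp_sPath_mul_e (j : ZMod n) (m : ℕ) (v : ZMod n) :
    pp K n (sPath K n j m) * e v = if v = j - m then pp K n (sPath K n j m) else 0 := by
  induction m generalizing j with
  | zero => simp only [pp_sPath_zero, e_mul_e, Nat.cast_zero, sub_zero, eq_comm]
  | succ m ih =>
    rw [pp_sPath_succ, mul_assoc, ih, mul_ite, mul_zero, Nat.cast_succ, sub_add_eq_sub_sub_swap]

theorem pp_sPath_mul_s (j : ZMod n) (m : ℕ) :
    pp K n (sPath K n j m) * s (j - (m : ZMod n) - 1) = pp K n (sPath K n j (m + 1)) := by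
  induction m generalizing j with
  | zero => simp only [pp_sPath_zero, pp_sPath_succ, Nat.cast_zero, sub_zero, e_mul_s, s_mul_e,
      sub_add_cancel, if_true]
  | succ m ih =>
    rw [pp_sPath_succ, mul_assoc, Nat.cast_succ, sub_add_eq_sub_sub_swap, ih,
      pp_sPath_succ j (m + 1)]

/-- Commuting a nonstar arrow past a star path is where the preprojective relation enters. -/
theorem pp_sPath_mul_a (j : ZMod n) (m : ℕ) :
    pp K n (sPath K n j m) * a (j - (m : ZMod n)) = a j * pp K n (sPath K n (j + 1) m) := by
  induction m generalizing j with
  | zero => simp only [pp_sPath_zero, Nat.cast_zero, sub_zero, e_mul_a, a_mul_e, if_true]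
  | succ m ih =>
    rw [pp_sPath_succ, mul_assoc, Nat.cast_succ, sub_add_eq_sub_sub_swap, ih, ← mul_assoc,
      ← a_mul_s, sub_add_cancel, mul_assoc, pp_sPath_succ (j + 1), add_sub_cancel_right]

theorem cpath_eq_mul (i : ZMod n) (ℓ m : ℕ) :
    cpath K n i ℓ m = pp K n (aPath K n i ℓ) * pp K n (sPath K n (i + ℓ) m) :=
  map_mul _ _ _

theorem cpath_zero_zero (i : ZMod n) : cpath K n i 0 0 = e i := by
  rw [cpath_eq_mul, pp_aPath_zero, pp_sPath_zero, Nat.cast_zero, add_zero, e_mul_e, if_pos rfl]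

theorem cpath_one_zero (i : ZMod n) : cpath K n i 1 0 = a i := by
  rw [cpath_eq_mul, Nat.cast_one, pp_sPath_zero, pp_aPath_succ, pp_aPath_zero, mul_assoc, e_mul_e,
    if_pos rfl, a_mul_e, if_pos rfl]

theorem cpath_mul_e (i : ZMod n) (ℓ m : ℕ) (j : ZMod n) :
    cpath K n i ℓ m * e j = if j = i + ℓ - m then cpath K n i ℓ m else 0 := by
  rw [cpath_eq_mul, mul_assoc, pp_sPath_mul_e, mul_ite, mul_zero]

theorem cpath_mul_a (i : ZMod n) (ℓ m : ℕ) (j : ZMod n) :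
    cpath K n i ℓ m * a j = if j = i + ℓ - m then cpath K n i (ℓ + 1) m else 0 := by
  split_ifs with h
  · rw [cpath_eq_mul, mul_assoc, h, pp_sPath_mul_a, ← mul_assoc, pp_aPath_mul_a, cpath_eq_mul,
      Nat.cast_succ, add_assoc]
  · rw [← e_mul_a_self, ← mul_assoc, cpath_mul_e, if_neg h, zero_mul]

theorem cpath_mul_s (i : ZMod n) (ℓ m : ℕ) (j : ZMod n) :
    cpath K n i ℓ m * s j = if j = i + ℓ - m - 1 then cpath K n i ℓ (m + 1) else 0 := by
  split_ifs with h
  · rw [cpath_eq_mul, mul_assoc, h, pp_sPath_mul_s, cpath_eq_mul]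
  · rw [← e_mul_s_self, ← mul_assoc, cpath_mul_e,
      if_neg fun h' => h (by rw [← h', add_sub_cancel_right]), zero_mul]

theorem s1_eq : s1 K n = ∑ i : ZMod n, (a i + s i) :=
  (map_sum _ _ _).trans (Finset.sum_congr rfl fun _ _ => map_add _ _ _)

theorem cpath_mul_s1 (i : ZMod n) (ℓ m : ℕ) :
    cpath K n i ℓ m * s1 K n = cpath K n i (ℓ + 1) m + cpath K n i ℓ (m + 1) := by
  simp only [s1_eq, Finset.mul_sum, mul_add, Finset.sum_add_distrib, cpath_mul_a, cpath_mul_s,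
    Finset.sum_ite_eq', Finset.mem_univ, if_true]

variable (K n) in
/-- The orbit sum `O(1,1)`. -/
noncomputable def cycleSum : Preproj K n := ∑ i : ZMod n, a i * s i

theorem cpath_mul_cycleSum (i : ZMod n) (ℓ m : ℕ) :
    cpath K n i ℓ m * cycleSum K n = cpath K n i (ℓ + 1) (m + 1) := by
  simp only [cycleSum, Finset.mul_sum, ← mul_assoc, cpath_mul_a, ite_mul, zero_mul, cpath_mul_s]
  rw [Finset.sum_ite_eq', if_pos (Finset.mem_univ _), if_pos (by push_cast; ring)]

theorem adjoin_range_pp_ι :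
    Algebra.adjoin K (Set.range fun g => pp K n (FreeAlgebra.ι K g)) = ⊤ := by
  rw [Set.range_comp' (pp K n), Algebra.adjoin_image, FreeAlgebra.adjoin_range_ι, Algebra.map_top,
    AlgHom.range_eq_top]
  exact RingQuot.mkAlgHom_surjective K _

theorem span_cpath :
    Submodule.span K (Set.range fun p : ZMod n × ℕ × ℕ => cpath K n p.1 p.2.1 p.2.2) = ⊤ := by
  refine Submodule.eq_top_of_mul_mem adjoin_range_pp_ι _ ?_ ?_
  · rw [← sum_e]
    exact Submodule.sum_mem _ fun i _ =>
      cpath_zero_zero (K := K) i ▸ Submodule.subset_span ⟨(i, 0, 0), rfl⟩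
  · rintro x hx - ⟨g, rfl⟩
    induction hx using Submodule.span_induction with
    | mem y hy =>
      obtain ⟨⟨i, ℓ, m⟩, rfl⟩ := hy
      have mem : ∀ ℓ' m', cpath K n i ℓ' m' ∈ Submodule.span K
          (Set.range fun p : ZMod n × ℕ × ℕ => cpath K n p.1 p.2.1 p.2.2) :=
        fun ℓ' m' => Submodule.subset_span ⟨(i, ℓ', m'), rfl⟩
      cases g with
      | vtx j =>
        show cpath K n i ℓ m * e j ∈ _
        rw [cpath_mul_e]
        split_ifs
        exacts [mem _ _, zero_mem _]
      | arr j =>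
        show cpath K n i ℓ m * a j ∈ _
        rw [cpath_mul_a]
        split_ifs
        exacts [mem _ _, zero_mem _]
      | star j =>
        show cpath K n i ℓ m * s j ∈ _
        rw [cpath_mul_s]
        split_ifs
        exacts [mem _ _, zero_mem _]
    | zero => simp
    | add y z _ _ hy hz => simpa only [add_mul] using Submodule.add_mem _ hy hz
    | smul t y _ hy => simpa only [smul_mul_assoc] using Submodule.smul_mem _ t hy

end CanonicalPaths

section Representation

open Matrix MvPolynomial

variable (K) in
/-- `X false` and `X true` play the roles of `x` and `y`. -/
noncomputable def repGen : PPGen n → Matrix (ZMod n) (ZMod n) (MvPolynomial Bool K)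
  | .vtx i => single i i 1
  | .arr i => single i (i + 1) (X false)
  | .star i => single (i + 1) i (X true)

theorem lift_repGen_rel ⦃u v : PPFree K n⦄ (h : PPRel K n u v) :
    FreeAlgebra.lift K (repGen K) u = FreeAlgebra.lift K (repGen K) v := by
  have hshift : ∑ i : ZMod n, single (i + 1) (i + 1) (X true * X false : MvPolynomial Bool K) =
      ∑ i : ZMod n, single i i (X false * X true) := by
    rw [mul_comm]
    exact ZMod.sum_comp_add_one fun i => single i i _
  induction h <;>
    simp only [E, A, S, map_mul, map_sum, map_sub, map_one, map_zero, FreeAlgebra.lift_ι_apply,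
      repGen, single_mul_single_same, one_mul, mul_one, sum_single_one]
  case vtx_mul i j => split_ifs with h <;> simp [h, repGen]
  case arr_left' _ _ h => exact single_mul_single_of_ne (h := h) ..
  case arr_right' _ _ h => exact single_mul_single_of_ne (h := Ne.symm h) ..
  case star_left' _ _ h => exact single_mul_single_of_ne (h := h) ..
  case star_right' _ _ h => exact single_mul_single_of_ne (h := Ne.symm h) ..
  case preproj => rw [Finset.sum_sub_distrib, hshift, sub_self]

noncomputable def rep : Preproj K n →ₐ[K] Matrix (ZMod n) (ZMod n) (MvPolynomial Bool K) :=
  RingQuot.liftAlgHom K ⟨FreeAlgebra.lift K (repGen K), lift_repGen_rel⟩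

theorem rep_pp (u : PPFree K n) : rep (pp K n u) = FreeAlgebra.lift K (repGen K) u :=
  RingQuot.liftAlgHom_mkAlgHom_apply K _ lift_repGen_rel u

theorem rep_e (i : ZMod n) : rep (e (K := K) i) = single i i 1 := by
  rw [e, rep_pp, E, FreeAlgebra.lift_ι_apply]; rfl

theorem rep_a (i : ZMod n) : rep (a (K := K) i) = single i (i + 1) (X false) := by
  rw [a, rep_pp, A, FreeAlgebra.lift_ι_apply]; rfl

theorem rep_s (i : ZMod n) : rep (s (K := K) i) = single (i + 1) i (X true) := by
  rw [s, rep_pp, S, FreeAlgebra.lift_ι_apply]; rfl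

theorem rep_aPath (i : ZMod n) (ℓ : ℕ) :
    rep (pp K n (aPath K n i ℓ)) = single i (i + ℓ) (X false ^ ℓ) := by
  induction ℓ generalizing i with
  | zero => rw [pp_aPath_zero, rep_e, Nat.cast_zero, add_zero, pow_zero]
  | succ ℓ ih =>
    rw [pp_aPath_succ, map_mul, rep_a, ih, single_mul_single_same, ← pow_succ', Nat.cast_succ,
      add_right_comm, add_assoc]

theorem rep_sPath (j : ZMod n) (m : ℕ) :
    rep (pp K n (sPath K n j m)) = single j (j - m) (X true ^ m) := by
  induction m generalizing j with
  | zero => rw [pp_sPath_zero, rep_e, Nat.cast_zero, sub_zero, pow_zero]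
  | succ m ih =>
    rw [pp_sPath_succ, map_mul, rep_s, ih, sub_add_cancel, single_mul_single_same, ← pow_succ',
      Nat.cast_succ, sub_add_eq_sub_sub_swap]

theorem rep_cpath (i : ZMod n) (ℓ m : ℕ) :
    rep (cpath K n i ℓ m) =
      single i (i + ℓ - m) (monomial (Finsupp.single false ℓ + Finsupp.single true m) 1) := by
  rw [cpath_eq_mul, map_mul, rep_aPath, rep_sPath, single_mul_single_same, X_pow_eq_monomial,
    X_pow_eq_monomial, monomial_mul, one_mul]

theorem linearIndependent_rep_cpath :
    LinearIndependent K fun p : ZMod n × ℕ × ℕ => rep (cpath K n p.1 p.2.1 p.2.2) := by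
  let f (p : ZMod n × ℕ × ℕ) : ZMod n × ZMod n × (Bool →₀ ℕ) :=
    (p.1, p.1 + p.2.1 - p.2.2, Finsupp.single false p.2.1 + Finsupp.single true p.2.2)
  have hf : Function.Injective f := by
    rintro ⟨i, ℓ, m⟩ ⟨i', ℓ', m'⟩ h
    simp only [f, Prod.mk.injEq] at h
    obtain ⟨rfl, -, h⟩ := h
    have hℓ := DFunLike.congr_fun h false
    have hm := DFunLike.congr_fun h true
    simp only [Finsupp.add_apply, Finsupp.single_apply] at hℓ hm
    simp_all
  have hrep : (fun p : ZMod n × ℕ × ℕ => rep (cpath K n p.1 p.2.1 p.2.2)) =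
      (basisMonomials Bool K).matrix (ZMod n) (ZMod n) ∘ f :=
    funext fun p => by simp [f, rep_cpath]
  rw [hrep]
  exact ((basisMonomials Bool K).matrix (ZMod n) (ZMod n)).linearIndependent.comp f hf

theorem rep_injective : Function.Injective (rep (K := K) (n := n)) :=
  LinearMap.injective_of_linearIndependent (f := rep.toLinearMap) span_cpath
    linearIndependent_rep_cpath

theorem det_rep_sum_a_sub_sum_s_ne_zero :
    (rep (∑ i : ZMod n, a (K := K) i - ∑ i : ZMod n, s i)).det ≠ 0 := by
  intro h0
  have hperm : (eval (fun b : Bool => if b then (0 : K) else 1)).mapMatrix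
      (rep (∑ i : ZMod n, a (K := K) i - ∑ i : ZMod n, s i)) =
      (Equiv.addRight (1 : ZMod n)).permMatrix K := by
    simp only [map_sub, map_sum, rep_a, rep_s, RingHom.mapMatrix_apply, map_single, eval_X,
      Bool.false_eq_true, if_true, if_false, single_zero, Finset.sum_const_zero, sub_zero]
    ext i j
    simp [Matrix.sum_apply, single_apply, ite_and, PEquiv.toMatrix_apply]
  have hsign := congrArg (eval (fun b : Bool => if b then (0 : K) else 1)) h0
  rw [RingHom.map_det, hperm, det_permutation, map_zero] at hsign
  rcases Int.units_eq_one_or (Equiv.Perm.sign (Equiv.addRight (1 : ZMod n))) with h | h <;>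
    simp [h] at hsign

theorem eq_zero_of_sum_a_sub_sum_s_mul_eq_zero {x : Preproj K n}
    (h : (∑ i : ZMod n, a i - ∑ i : ZMod n, s i) * x = 0) : x = 0 := by
  have hreg := (isRegular_of_isLeftRegular_det
    (IsRegular.of_ne_zero (det_rep_sum_a_sub_sum_s_ne_zero (K := K) (n := n))).left).left
  refine rep_injective (hreg ?_)
  simp only [← map_mul, h, mul_zero]

end Representation

section Existence

def vertexArrowSpan (F : Subalgebra K (Preproj K n)) : Submodule K (Preproj K n) where
  carrier := {x | ∃ p q : ZMod n → F,
    x = ∑ i, (e i * (p i : Preproj K n) + a i * (q i : Preproj K n))}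
  add_mem' := by
    rintro _ _ ⟨p, q, rfl⟩ ⟨p', q', rfl⟩
    refine ⟨p + p', q + q', ?_⟩
    simp only [Pi.add_apply, Subalgebra.coe_add, mul_add, ← Finset.sum_add_distrib]
    exact Finset.sum_congr rfl fun _ _ => by abel
  zero_mem' := ⟨0, 0, by simp⟩
  smul_mem' := by
    rintro t _ ⟨p, q, rfl⟩
    refine ⟨t • p, t • q, ?_⟩
    simp only [Finset.smul_sum, smul_add, Pi.smul_apply, Subalgebra.coe_smul, mul_smul_comm]

variable {F : Subalgebra K (Preproj K n)}

theorem mul_mem_vertexArrowSpan {x c : Preproj K n} (hx : x ∈ vertexArrowSpan F) (hc : c ∈ F) :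
    x * c ∈ vertexArrowSpan F := by
  obtain ⟨p, q, rfl⟩ := hx
  refine ⟨fun i => p i * ⟨c, hc⟩, fun i => q i * ⟨c, hc⟩, ?_⟩
  simp only [Finset.sum_mul, add_mul, mul_assoc, Subalgebra.coe_mul]

theorem e_mem_vertexArrowSpan (i : ZMod n) : e i ∈ vertexArrowSpan F :=
  ⟨Pi.single i 1, 0, by simp [Pi.single_apply, apply_ite]⟩

theorem a_mem_vertexArrowSpan (i : ZMod n) : a i ∈ vertexArrowSpan F :=
  ⟨0, Pi.single i 1, by simp [Pi.single_apply, apply_ite]⟩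

theorem cpath_mem_vertexArrowSpan (hs1 : s1 K n ∈ F) (hcyc : cycleSum K n ∈ F) (i : ZMod n)
    (ℓ m : ℕ) : cpath K n i ℓ m ∈ vertexArrowSpan F := by
  induction m generalizing ℓ with
  | zero =>
    induction ℓ using Nat.twoStepInduction with
    | zero =>
      rw [cpath_zero_zero]
      exact e_mem_vertexArrowSpan i
    | one =>
      rw [cpath_one_zero]
      exact a_mem_vertexArrowSpan i
    | more ℓ h₀ h₁ =>
      have hrec : cpath K n i (ℓ + 2) 0 =
          cpath K n i (ℓ + 1) 0 * s1 K n - cpath K n i ℓ 0 * cycleSum K n := by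
        rw [cpath_mul_s1, cpath_mul_cycleSum, add_sub_cancel_right]
      rw [hrec]
      exact sub_mem (mul_mem_vertexArrowSpan h₁ hs1) (mul_mem_vertexArrowSpan h₀ hcyc)
  | succ m ih =>
    have hrec : cpath K n i ℓ (m + 1) = cpath K n i ℓ m * s1 K n - cpath K n i (ℓ + 1) m := by
      rw [cpath_mul_s1, add_sub_cancel_left]
    rw [hrec]
    exact sub_mem (mul_mem_vertexArrowSpan (ih ℓ) hs1) (ih (ℓ + 1))

theorem vertexArrowSpan_eq_top (hs1 : s1 K n ∈ F) (hcyc : cycleSum K n ∈ F) :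
    vertexArrowSpan F = ⊤ := by
  rw [eq_top_iff, ← span_cpath, Submodule.span_le]
  rintro _ ⟨⟨i, ℓ, m⟩, rfl⟩
  exact cpath_mem_vertexArrowSpan hs1 hcyc i ℓ m

end Existence

section Invariants

variable {Pρ Pr : Preproj K n →ₐ[K] Preproj K n}

theorem mem_fixDn_iff {x : Preproj K n} : x ∈ fixDn K n Pρ Pr ↔ Pρ x = x ∧ Pr x = x := Iff.rfl

section Generators

variable (hρA : ∀ i, Pρ (a i) = a (i + 1)) (hρS : ∀ i, Pρ (s i) = s (i + 1))
  (hrA : ∀ i, Pr (a i) = s (-i - 1)) (hrS : ∀ i, Pr (s i) = a (-i - 1))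
include hρA hρS hrA hrS

theorem s1_mem_fixDn : s1 K n ∈ fixDn K n Pρ Pr := by
  simp only [mem_fixDn_iff, s1_eq, map_sum, map_add, hρA, hρS, hrA, hrS]
  refine ⟨ZMod.sum_comp_add_one fun i => a i + s i, ?_⟩
  simpa only [add_comm] using ZMod.sum_comp_neg_sub_one fun i => a (K := K) i + s i

theorem cycleSum_mem_fixDn : cycleSum K n ∈ fixDn K n Pρ Pr := by
  simp only [mem_fixDn_iff, cycleSum, map_sum, map_mul, hρA, hρS, hrA, hrS]
  refine ⟨ZMod.sum_comp_add_one fun i => a i * s i, ?_⟩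
  rw [sum_a_mul_s]
  exact ZMod.sum_comp_neg_sub_one fun i => s (K := K) i * a i

end Generators

variable (hρE : ∀ i, Pρ (e i) = e (i + 1)) (hρA : ∀ i, Pρ (a i) = a (i + 1))
  (hrA : ∀ i, Pr (a i) = s (-i - 1))
include hρE hρA hrA

theorem eq_zero_of_e_mul_add_a_mul_eq_zero {γ δ : Preproj K n} (hγ : γ ∈ fixDn K n Pρ Pr)
    (hδ : δ ∈ fixDn K n Pρ Pr) {v : ZMod n} (h : e v * γ + a v * δ = 0) : γ = 0 ∧ δ = 0 := by
  obtain ⟨hργ, hrγ⟩ := mem_fixDn_iff.mp hγ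
  obtain ⟨hρδ, hrδ⟩ := mem_fixDn_iff.mp hδ
  have hall : ∀ w, e w * γ + a w * δ = 0 := ZMod.forall_of_add_one h fun w hw => by
    simpa only [map_add, map_mul, map_zero, hρE, hρA, hργ, hρδ] using congrArg Pρ hw
  have hA : γ + (∑ i, a i) * δ = 0 := by
    simpa only [Finset.sum_add_distrib, ← Finset.sum_mul, sum_e, one_mul, Finset.sum_const_zero]
      using Finset.sum_congr rfl fun w (_ : w ∈ Finset.univ) => hall w
  have hS : γ + (∑ i, s i) * δ = 0 := by
    simpa only [map_add, map_mul, map_sum, map_zero, hrA, hrγ, hrδ, ZMod.sum_comp_neg_sub_one]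
      using congrArg Pr hA
  have hδ0 : δ = 0 := eq_zero_of_sum_a_sub_sum_s_mul_eq_zero <| by
    rw [sub_mul, sub_eq_zero]
    exact add_left_cancel (hA.trans hS.symm)
  refine ⟨?_, hδ0⟩
  simpa only [hδ0, mul_zero, add_zero] using hA

theorem eq_zero_of_sum_e_mul_add_a_mul_eq_zero {p q : ZMod n → fixDn K n Pρ Pr}
    (h : ∑ i, (e i * (p i : Preproj K n) + a i * (q i : Preproj K n)) = 0) : p = 0 ∧ q = 0 := by
  have h0 (v : ZMod n) := eq_zero_of_e_mul_add_a_mul_eq_zero hρE hρA hrA (p v).2 (q v).2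
    ((e_mul_sum_e_mul_add_a_mul _ _ v).symm.trans (by rw [h, mul_zero]))
  exact ⟨funext fun v => Subtype.ext (h0 v).1, funext fun v => Subtype.ext (h0 v).2⟩

end Invariants

theorem sum_sumElim_mul (c : Fin n ⊕ Fin n → Preproj K n) :
    ∑ j, Sum.elim (fun i : Fin n => pp K n (E K n (i : ℕ)))
        (fun i : Fin n => pp K n (A K n (i : ℕ))) j * c j =
      ∑ i, (e i * c (.inl ((ZMod.finEquiv n).symm i)) +
        a i * c (.inr ((ZMod.finEquiv n).symm i))) := by
  rw [Fintype.sum_sum_type, ← Finset.sum_add_distrib, ← (ZMod.finEquiv n).toEquiv.sum_comp]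
  refine Finset.sum_congr rfl fun k _ => ?_
  simp only [RingEquiv.toEquiv_eq_coe, EquivLike.coe_coe, RingEquiv.symm_apply_apply]
  rw [ZMod.finEquiv_apply]
  rfl

end Preproj

open Preproj in
theorem statement14
    (Pρ Pr : Preproj K n →ₐ[K] Preproj K n)
    (hρE : ∀ i, Pρ (pp K n (E K n i)) = pp K n (E K n (i + 1)))
    (hρA : ∀ i, Pρ (pp K n (A K n i)) = pp K n (A K n (i + 1)))
    (hρS : ∀ i, Pρ (pp K n (S K n i)) = pp K n (S K n (i + 1)))
    (hrA : ∀ i, Pr (pp K n (A K n i)) = pp K n (S K n (-i - 1)))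
    (hrS : ∀ i, Pr (pp K n (S K n i)) = pp K n (A K n (-i - 1))) :
    (∀ x : Preproj K n, ∃ c : Fin n ⊕ Fin n → ↥(fixDn K n Pρ Pr),
      x = ∑ j : Fin n ⊕ Fin n,
        (Sum.elim (fun i : Fin n => pp K n (E K n (i : ℕ)))
          (fun i : Fin n => pp K n (A K n (i : ℕ))) j) * ((c j : Preproj K n))) ∧
    (∀ c : Fin n ⊕ Fin n → ↥(fixDn K n Pρ Pr),
      (∑ j : Fin n ⊕ Fin n,
        (Sum.elim (fun i : Fin n => pp K n (E K n (i : ℕ)))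
          (fun i : Fin n => pp K n (A K n (i : ℕ))) j) * ((c j : Preproj K n))) = 0 →
      c = 0) := by
  have hspan := vertexArrowSpan_eq_top (s1_mem_fixDn hρA hρS hrA hrS)
    (cycleSum_mem_fixDn hρA hρS hrA hrS)
  refine ⟨fun x => ?_, fun c hc => ?_⟩
  · obtain ⟨p, q, rfl⟩ : x ∈ vertexArrowSpan (fixDn K n Pρ Pr) := hspan ▸ Submodule.mem_top
    refine ⟨Sum.elim (p ∘ ZMod.finEquiv n) (q ∘ ZMod.finEquiv n), ?_⟩
    rw [sum_sumElim_mul]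
    simp
  · rw [sum_sumElim_mul] at hc
    obtain ⟨hp, hq⟩ := eq_zero_of_sum_e_mul_add_a_mul_eq_zero hρE hρA hrA hc
    funext k
    rcases k with k | k
    · simpa using congrFun hp (ZMod.finEquiv n k)
    · simpa using congrFun hq (ZMod.finEquiv n k)
end
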